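/- Contextual equivalence ≡ctx of the language Ref² is the greatest adequate congruence: ≡ctx is an adequate congruence on (Rd, Wr), and every adequate congruence R satisfies R_r ⊆ ≡ctx_r and R_w ⊆ ≡ctx_w. -/
import Mathlib


/-! # Statement 16: contextual equivalence of Ref² is the greatest adequate congruence -/
namespace RefLang

/-- Expressions of Ref² over the set `Loc` of locations. -/
inductive RExp (Loc : Type) : Type
  | loc : Loc → RExp Loc
  | int : ℤ → RExp Loc
  | deref : RExp Loc → RExp Loc
  | add : RExp Loc → RExp Loc → RExp Loc
  | sub : RExp Loc → RExp Loc → RExp Loc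

mutual
/-- Readers of Ref². -/
inductive Rd (Loc : Type) : Type
  | skip : Rd Loc
  | whileE : RExp Loc → Rd Loc → Rd Loc
  /-- `e := p` -/
  | assign : RExp Loc → Rd Loc → Rd Loc
  /-- `if e then p else q` -/
  | ite : RExp Loc → Rd Loc → Rd Loc → Rd Loc
  | seq : Rd Loc → Rd Loc → Rd Loc
  /-- `&p` -/
  | ref : Rd Loc → Rd Loc
  | expr : RExp Loc → Rd Loc
  | proc : Rd Loc → Rd Loc
/-- Writers of Ref².  Here values are elements of `V(Rd) = Loc ⊕ ℤ ⊕ Rd Loc` and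
stores are partial maps `Loc → Option (V(Rd))`. -/
inductive Wr (Loc : Type) : Type
  /-- `e := c` -/
  | assignW : RExp Loc → Wr Loc → Wr Loc
  /-- `c ; q` -/
  | seqW : Wr Loc → Rd Loc → Wr Loc
  /-- `&c` -/
  | refW : Wr Loc → Wr Loc
  /-- `s.c` -/
  | outW : (Loc → Option (Loc ⊕ ℤ ⊕ Rd Loc)) → Wr Loc → Wr Loc
  /-- `[p]_s` -/
  | runW : Rd Loc → (Loc → Option (Loc ⊕ ℤ ⊕ Rd Loc)) → Wr Loc
  /-- `ret_{v,s}` -/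
  | retV : (Loc ⊕ ℤ ⊕ Rd Loc) → (Loc → Option (Loc ⊕ ℤ ⊕ Rd Loc)) → Wr Loc
  /-- `ret_s` -/
  | retS : (Loc → Option (Loc ⊕ ℤ ⊕ Rd Loc)) → Wr Loc
end

/-- Values `V(Rd)`. -/
abbrev Val (Loc : Type) : Type := Loc ⊕ ℤ ⊕ Rd Loc

/-- Stores `𝒮(Rd)`: partial maps from locations to values. -/
abbrev St (Loc : Type) : Type := Loc → Option (Val Loc)

variable {Loc : Type}

open Classical in
/-- Store update `s[l ↦ v]`. -/
noncomputable def updS (s : St Loc) (l : Loc) (v : Val Loc) : St Loc :=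
  fun l' => if l' = l then some v else s l'

/-- Partial expression evaluation `eev : 𝒮(Rd) × Ex ⇀ V(Rd)`. -/
def eev (s : St Loc) : RExp Loc → Option (Val Loc)
  | .loc l => some (.inl l)
  | .int n => some (.inr (.inl n))
  | .deref e =>
      match eev s e with
      | some (.inl l) => s l
      | _ => none
  | .add e₁ e₂ =>
      match eev s e₁, eev s e₂ with
      | some (.inr (.inl n₁)), some (.inr (.inl n₂)) => some (.inr (.inl (n₁ + n₂)))
      | _, _ => none
  | .sub e₁ e₂ =>
      match eev s e₁, eev s e₂ with
      | some (.inr (.inl n₁)), some (.inr (.inl n₂)) => some (.inr (.inl (n₁ - n₂)))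
      | _, _ => none

/-- The reader semantics of Ref²: `rstep p s = some c` means `p,s → c` (there is at
most one transition from each `p,s`; `none` means `p` is stuck at `s`). -/
def rstep : Rd Loc → St Loc → Option (Wr Loc)
  | .skip, s => some (.retS s)
  | .whileE e p, s =>
      match eev s e with
      | some (.inr (.inl n)) =>
          if n = 0 then some (.retS s)
          else some (.outW s (.runW (.seq p (.whileE e p)) s))
      | _ => none
  | .assign e p, s => some (.assignW e (.runW p s))
  | .ite e p q, s =>
      match eev s e with
      | some (.inr (.inl n)) =>
          if n = 0 then some (.outW s (.runW q s)) else some (.outW s (.runW p s))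
      | _ => none
  | .seq p q, s => some (.seqW (.runW p s) q)
  | .ref p, s => some (.refW (.runW p s))
  | .expr e, s =>
      match eev s e with
      | some (.inr (.inr p)) => some (.outW s (.runW p s))
      | some v => some (.retV v s)
      | none => none
  | .proc p, s => some (.retV (.inr (.inr p)) s)

/-- Labels of writer transitions: `tau d` is `c → d`, `out s d` is `c →ˢ d`,
`dn s` is `c ↓ s`, and `dnV v s` is `c ↓ v,s`. -/
inductive WLab (Loc : Type) : Type
  | tau : Wr Loc → WLab Loc
  | out : St Loc → Wr Loc → WLab Loc
  | dn : St Loc → WLab Loc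
  | dnV : Val Loc → St Loc → WLab Loc

/-- The writer semantics of Ref², as an inductively defined (nondeterministic)
labelled transition relation. -/
inductive WTr : Wr Loc → WLab Loc → Prop
  | runW {p : Rd Loc} {s c} : rstep p s = some c → WTr (.runW p s) (.tau c)
  | retV {v : Val Loc} {s} : WTr (.retV v s) (.dnV v s)
  | retS {s : St Loc} : WTr (.retS s) (.dn s)
  | outW {s : St Loc} {c} : WTr (.outW s c) (.out s c)
  | refTau {c d : Wr Loc} : WTr c (.tau d) → WTr (.refW c) (.tau (.refW d))
  | refOut {c d : Wr Loc} {s} : WTr c (.out s d) → WTr (.refW c) (.out s (.refW d))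
  | refDn {c : Wr Loc} {v s l} :
      WTr c (.dnV v s) → s l = none → WTr (.refW c) (.dnV (.inl l) (updS s l v))
  | seqTau {c d : Wr Loc} {q} : WTr c (.tau d) → WTr (.seqW c q) (.tau (.seqW d q))
  | seqOut {c d : Wr Loc} {s q} :
      WTr c (.out s d) → WTr (.seqW c q) (.out s (.seqW d q))
  | seqDnV {c : Wr Loc} {v s q} :
      WTr c (.dnV v s) → WTr (.seqW c q) (.out s (.runW q s))
  | seqDn {c : Wr Loc} {s q} : WTr c (.dn s) → WTr (.seqW c q) (.tau (.runW q s))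
  | asgTau {e} {c d : Wr Loc} :
      WTr c (.tau d) → WTr (.assignW e c) (.tau (.assignW e d))
  | asgOut {e} {c d : Wr Loc} {s} :
      WTr c (.out s d) → WTr (.assignW e c) (.out s (.assignW e d))
  | asgDn {e} {c : Wr Loc} {v s l} :
      eev s e = some (.inl l) → WTr c (.dnV v s) →
      WTr (.assignW e c) (.dn (updS s l v))

/-- A single (silent or output) writer step. -/
def Step1 (c d : Wr Loc) : Prop := WTr c (.tau d) ∨ ∃ s, WTr c (.out s d)

/-- The weak transition `c ⇒ d`: a finite chain of `→` and `→ˢ` steps. -/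
def Wk : Wr Loc → Wr Loc → Prop := Relation.ReflTransGen Step1

/-- `c ⇓ s`: `c ⇒ c' ↓ s` for some `c'`. -/
def BigS (c : Wr Loc) (s : St Loc) : Prop := ∃ c', Wk c c' ∧ WTr c' (.dn s)

/-- `c ⇓ v,s`: `c ⇒ c' ↓ v,s` for some `c'`. -/
def BigV (c : Wr Loc) (v : Val Loc) (s : St Loc) : Prop :=
  ∃ c', Wk c c' ∧ WTr c' (.dnV v s)

/-- `c ⇓`: the writer `c` terminates. -/
def ConvW (c : Wr Loc) : Prop := (∃ v s, BigV c v s) ∨ (∃ s, BigS c s)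

/-- `p,s ⇓`: the reader `p` terminates on the input store `s`. -/
def ConvR (p : Rd Loc) (s : St Loc) : Prop := ∃ c, rstep p s = some c ∧ ConvW c

/-- The relational lifting `V(R_r) = Δ_Loc ∪ Δ_ℤ ∪ R_r` on values. -/
def VRel (Rr : Rd Loc → Rd Loc → Prop) : Val Loc → Val Loc → Prop
  | .inl l, .inl l' => l = l'
  | .inr (.inl n), .inr (.inl n') => n = n'
  | .inr (.inr p), .inr (.inr p') => Rr p p'
  | _, _ => False

/-- The relational lifting `𝒮(R_r)` on stores: equal domains and `V(R_r)`-related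
values at every defined location. -/
def SRel (Rr : Rd Loc → Rd Loc → Prop) (s₁ s₂ : St Loc) : Prop :=
  ∀ l, (s₁ l = none ∧ s₂ l = none) ∨
    ∃ v₁ v₂, s₁ l = some v₁ ∧ s₂ l = some v₂ ∧ VRel Rr v₁ v₂

end RefLang
namespace RefLang

variable {Loc : Type}

/-- A two-sorted relation on `(Rd, Wr)` is adequate if related readers terminate on
the same input stores and related writers either both terminate or both diverge. -/
def IsAdequate (Rr : Rd Loc → Rd Loc → Prop) (Rw : Wr Loc → Wr Loc → Prop) : Prop :=
  (∀ p q, Rr p q → ∀ s, (ConvR p s ↔ ConvR q s)) ∧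
  (∀ c d, Rw c d → (ConvW c ↔ ConvW d))

/-- A two-sorted relation on `(Rd, Wr)` is a congruence if it is compatible with
all constructors of Ref². -/
def IsCongrRef (Rr : Rd Loc → Rd Loc → Prop) (Rw : Wr Loc → Wr Loc → Prop) : Prop :=
  (∀ p p' q q', Rr p p' → Rr q q' → Rr (.seq p q) (.seq p' q')) ∧
  (∀ e p p', Rr p p' → Rr (.whileE e p) (.whileE e p')) ∧
  (∀ e p p' q q', Rr p p' → Rr q q' → Rr (.ite e p q) (.ite e p' q')) ∧
  (∀ e p p', Rr p p' → Rr (.assign e p) (.assign e p')) ∧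
  (∀ p p', Rr p p' → Rr (.ref p) (.ref p')) ∧
  (∀ p p', Rr p p' → Rr (.proc p) (.proc p')) ∧
  Rr .skip .skip ∧
  (∀ e, Rr (.expr e) (.expr e)) ∧
  (∀ c c' q q', Rw c c' → Rr q q' → Rw (.seqW c q) (.seqW c' q')) ∧
  (∀ e c c', Rw c c' → Rw (.assignW e c) (.assignW e c')) ∧
  (∀ c c', Rw c c' → Rw (.refW c) (.refW c')) ∧
  (∀ s s' c c', SRel Rr s s' → Rw c c' → Rw (.outW s c) (.outW s' c')) ∧
  (∀ p p' s s', Rr p p' → SRel Rr s s' → Rw (.runW p s) (.runW p' s')) ∧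
  (∀ v v' s s', VRel Rr v v' → SRel Rr s s' → Rw (.retV v s) (.retV v' s')) ∧
  (∀ s s', SRel Rr s s' → Rw (.retS s) (.retS s'))

end RefLang
namespace RefLang

/-- Sorts of Ref² terms: readers (`r`) and writers (`w`). -/
inductive Sort2 : Type
  | r
  | w

/-- Terms of a given sort. -/
def Tm2 (Loc : Type) : Sort2 → Type
  | .r => Rd Loc
  | .w => Wr Loc

mutual
/-- Reader-sorted one-hole contexts of Ref² with a hole of sort `h`. -/
inductive CtxR (Loc : Type) : Sort2 → Type
  | hole : CtxR Loc .r
  | whileE {h} : RExp Loc → CtxR Loc h → CtxR Loc h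
  | assign {h} : RExp Loc → CtxR Loc h → CtxR Loc h
  | iteL {h} : RExp Loc → CtxR Loc h → Rd Loc → CtxR Loc h
  | iteR {h} : RExp Loc → Rd Loc → CtxR Loc h → CtxR Loc h
  | seqL {h} : CtxR Loc h → Rd Loc → CtxR Loc h
  | seqR {h} : Rd Loc → CtxR Loc h → CtxR Loc h
  | ref {h} : CtxR Loc h → CtxR Loc h
  | proc {h} : CtxR Loc h → CtxR Loc h
/-- Writer-sorted one-hole contexts of Ref² with a hole of sort `h`. -/
inductive CtxW (Loc : Type) : Sort2 → Type
  | hole : CtxW Loc .w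
  | assignW {h} : RExp Loc → CtxW Loc h → CtxW Loc h
  | seqWL {h} : CtxW Loc h → Rd Loc → CtxW Loc h
  | seqWR {h} : Wr Loc → CtxR Loc h → CtxW Loc h
  | refW {h} : CtxW Loc h → CtxW Loc h
  /-- `s.C` with the hole in the writer argument. -/
  | outWC {h} : St Loc → CtxW Loc h → CtxW Loc h
  /-- `S.c` with the hole in the store. -/
  | outWS {h} : CtxS Loc h → Wr Loc → CtxW Loc h
  /-- `[C]_s` with the hole in the reader. -/
  | runWP {h} : CtxR Loc h → St Loc → CtxW Loc h
  /-- `[p]_S` with the hole in the store. -/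
  | runWS {h} : Rd Loc → CtxS Loc h → CtxW Loc h
  /-- `ret_{C,s}` with the hole inside the (reader) value. -/
  | retVV {h} : CtxR Loc h → St Loc → CtxW Loc h
  /-- `ret_{v,S}` with the hole in the store. -/
  | retVS {h} : Val Loc → CtxS Loc h → CtxW Loc h
  /-- `ret_S` with the hole in the store. -/
  | retSS {h} : CtxS Loc h → CtxW Loc h
/-- One-hole store contexts: a store `s` whose value at the location `l` is a
reader containing the hole. -/
inductive CtxS (Loc : Type) : Sort2 → Type
  | mk {h} : St Loc → Loc → CtxR Loc h → CtxS Loc h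
end

variable {Loc : Type}

mutual
/-- Plugging a term into a reader-sorted one-hole context. -/
noncomputable def plugR : {h : Sort2} → CtxR Loc h → Tm2 Loc h → Rd Loc
  | _, .hole, t => t
  | _, .whileE e C, t => .whileE e (plugR C t)
  | _, .assign e C, t => .assign e (plugR C t)
  | _, .iteL e C q, t => .ite e (plugR C t) q
  | _, .iteR e p C, t => .ite e p (plugR C t)
  | _, .seqL C q, t => .seq (plugR C t) q
  | _, .seqR p C, t => .seq p (plugR C t)
  | _, .ref C, t => .ref (plugR C t)
  | _, .proc C, t => .proc (plugR C t)
/-- Plugging a term into a writer-sorted one-hole context. -/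
noncomputable def plugW : {h : Sort2} → CtxW Loc h → Tm2 Loc h → Wr Loc
  | _, .hole, t => t
  | _, .assignW e C, t => .assignW e (plugW C t)
  | _, .seqWL C q, t => .seqW (plugW C t) q
  | _, .seqWR c C, t => .seqW c (plugR C t)
  | _, .refW C, t => .refW (plugW C t)
  | _, .outWC s C, t => .outW s (plugW C t)
  | _, .outWS Cs c, t => .outW (plugS Cs t) c
  | _, .runWP C s, t => .runW (plugR C t) s
  | _, .runWS p Cs, t => .runW p (plugS Cs t)
  | _, .retVV C s, t => .retV (.inr (.inr (plugR C t))) s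
  | _, .retVS v Cs, t => .retV v (plugS Cs t)
  | _, .retSS Cs, t => .retS (plugS Cs t)
/-- Plugging a term into a one-hole store context. -/
noncomputable def plugS : {h : Sort2} → CtxS Loc h → Tm2 Loc h → St Loc
  | _, .mk s l C, t => updS s l (.inr (.inr (plugR C t)))
end

/-- Contextual equivalence `≡ctx_r` on readers: `C[p]` and `C[q]` have the same
termination behaviour for every context with a reader-sorted hole. -/
def CtxEqR (p q : Rd Loc) : Prop :=
  (∀ (C : CtxR Loc .r) (s : St Loc), ConvR (plugR C p) s ↔ ConvR (plugR C q) s) ∧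
  (∀ C : CtxW Loc .r, ConvW (plugW C p) ↔ ConvW (plugW C q))

/-- Contextual equivalence `≡ctx_w` on writers: `C[c]` and `C[d]` have the same
termination behaviour for every context with a writer-sorted hole. -/
def CtxEqW (c d : Wr Loc) : Prop :=
  (∀ (C : CtxR Loc .w) (s : St Loc), ConvR (plugR C c) s ↔ ConvR (plugR C d) s) ∧
  (∀ C : CtxW Loc .w, ConvW (plugW C c) ↔ ConvW (plugW C d))

end RefLang

namespace RefLang

variable {Loc : Type}

/-! ## Auxiliary development -/

lemma ctxEqR_refl (p : Rd Loc) : CtxEqR p p := ⟨fun _ _ => Iff.rfl, fun _ => Iff.rfl⟩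

lemma ctxEqR_symm {p q : Rd Loc} (h : CtxEqR p q) : CtxEqR q p :=
  ⟨fun C s => (h.1 C s).symm, fun C => (h.2 C).symm⟩

lemma ctxEqR_trans {p q r : Rd Loc} (h : CtxEqR p q) (h' : CtxEqR q r) : CtxEqR p r :=
  ⟨fun C s => (h.1 C s).trans (h'.1 C s), fun C => (h.2 C).trans (h'.2 C)⟩

lemma ctxEqW_symm {c d : Wr Loc} (h : CtxEqW c d) : CtxEqW d c :=
  ⟨fun C s => (h.1 C s).symm, fun C => (h.2 C).symm⟩

lemma ctxEqW_trans {c d e : Wr Loc} (h : CtxEqW c d) (h' : CtxEqW d e) : CtxEqW c e :=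
  ⟨fun C s => (h.1 C s).trans (h'.1 C s), fun C => (h.2 C).trans (h'.2 C)⟩

lemma vrel_refl {Rr : Rd Loc → Rd Loc → Prop} (hR : ∀ p, Rr p p) : ∀ v, VRel Rr v v
  | .inl _ => rfl
  | .inr (.inl _) => rfl
  | .inr (.inr p) => hR p

lemma vrel_symm {Rr : Rd Loc → Rd Loc → Prop} (hR : ∀ p q, Rr p q → Rr q p) :
    ∀ v w, VRel Rr v w → VRel Rr w v
  | .inl _, .inl _, h => h.symm
  | .inr (.inl _), .inr (.inl _), h => h.symm
  | .inr (.inr _), .inr (.inr _), h => hR _ _ h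

lemma srel_refl {Rr : Rd Loc → Rd Loc → Prop} (hR : ∀ p, Rr p p) (s : St Loc) :
    SRel Rr s s := by
  intro l
  cases h : s l with
  | none => exact Or.inl ⟨rfl, rfl⟩
  | some v => exact Or.inr ⟨v, v, rfl, rfl, vrel_refl hR v⟩

lemma srel_symm {Rr : Rd Loc → Rd Loc → Prop} (hR : ∀ p q, Rr p q → Rr q p)
    {s s' : St Loc} (h : SRel Rr s s') : SRel Rr s' s := by
  intro l
  rcases h l with ⟨h1, h2⟩ | ⟨v1, v2, h1, h2, hv⟩
  · exact Or.inl ⟨h2, h1⟩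
  · exact Or.inr ⟨v2, v1, h2, h1, vrel_symm hR _ _ hv⟩

lemma srel_updS {Rr : Rd Loc → Rd Loc → Prop} {s s' : St Loc} (h : SRel Rr s s')
    {v v' : Val Loc} (hv : VRel Rr v v') (l : Loc) :
    SRel Rr (updS s l v) (updS s' l v') := by
  intro l'
  by_cases hl : l' = l
  · exact Or.inr ⟨v, v', by simp [updS, hl], by simp [updS, hl], hv⟩
  · simpa [updS, hl] using h l'

/-! ### Emptiness of writer-holed reader contexts -/

mutual
def emptyCtxR : CtxR Loc .w → False
  | .whileE _ C => emptyCtxR C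
  | .assign _ C => emptyCtxR C
  | .iteL _ C _ => emptyCtxR C
  | .iteR _ _ C => emptyCtxR C
  | .seqL C _ => emptyCtxR C
  | .seqR _ C => emptyCtxR C
  | .ref C => emptyCtxR C
  | .proc C => emptyCtxR C

def emptyCtxS : CtxS Loc .w → False
  | .mk _ _ C => emptyCtxR C
end

/-! ### Composition of one-hole contexts -/

mutual
noncomputable def compR : {h : Sort2} → CtxR Loc .r → CtxR Loc h → CtxR Loc h
  | _, .hole, D => D
  | _, .whileE e C, D => .whileE e (compR C D)
  | _, .assign e C, D => .assign e (compR C D)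
  | _, .iteL e C q, D => .iteL e (compR C D) q
  | _, .iteR e p C, D => .iteR e p (compR C D)
  | _, .seqL C q, D => .seqL (compR C D) q
  | _, .seqR p C, D => .seqR p (compR C D)
  | _, .ref C, D => .ref (compR C D)
  | _, .proc C, D => .proc (compR C D)

noncomputable def compW : {h : Sort2} → CtxW Loc .r → CtxR Loc h → CtxW Loc h
  | _, .assignW e C, D => .assignW e (compW C D)
  | _, .seqWL C q, D => .seqWL (compW C D) q
  | _, .seqWR c C, D => .seqWR c (compR C D)
  | _, .refW C, D => .refW (compW C D)
  | _, .outWC s C, D => .outWC s (compW C D)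
  | _, .outWS Cs c, D => .outWS (compS Cs D) c
  | _, .runWP C s, D => .runWP (compR C D) s
  | _, .runWS p Cs, D => .runWS p (compS Cs D)
  | _, .retVV C s, D => .retVV (compR C D) s
  | _, .retVS v Cs, D => .retVS v (compS Cs D)
  | _, .retSS Cs, D => .retSS (compS Cs D)

noncomputable def compS : {h : Sort2} → CtxS Loc .r → CtxR Loc h → CtxS Loc h
  | _, .mk s l C, D => .mk s l (compR C D)
end

mutual
noncomputable def dompR : {h : Sort2} → CtxR Loc .w → CtxW Loc h → CtxR Loc h
  | _, .whileE e C, D => .whileE e (dompR C D)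
  | _, .assign e C, D => .assign e (dompR C D)
  | _, .iteL e C q, D => .iteL e (dompR C D) q
  | _, .iteR e p C, D => .iteR e p (dompR C D)
  | _, .seqL C q, D => .seqL (dompR C D) q
  | _, .seqR p C, D => .seqR p (dompR C D)
  | _, .ref C, D => .ref (dompR C D)
  | _, .proc C, D => .proc (dompR C D)

noncomputable def dompW : {h : Sort2} → CtxW Loc .w → CtxW Loc h → CtxW Loc h
  | _, .hole, D => D
  | _, .assignW e C, D => .assignW e (dompW C D)
  | _, .seqWL C q, D => .seqWL (dompW C D) q
  | _, .seqWR c C, D => .seqWR c (dompR C D)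
  | _, .refW C, D => .refW (dompW C D)
  | _, .outWC s C, D => .outWC s (dompW C D)
  | _, .outWS Cs c, D => .outWS (dompS Cs D) c
  | _, .runWP C s, D => .runWP (dompR C D) s
  | _, .runWS p Cs, D => .runWS p (dompS Cs D)
  | _, .retVV C s, D => .retVV (dompR C D) s
  | _, .retVS v Cs, D => .retVS v (dompS Cs D)
  | _, .retSS Cs, D => .retSS (dompS Cs D)

noncomputable def dompS : {h : Sort2} → CtxS Loc .w → CtxW Loc h → CtxS Loc h
  | _, .mk s l C, D => .mk s l (dompR C D)
end

mutual
theorem plug_compR : ∀ {h : Sort2} (C : CtxR Loc .r) (D : CtxR Loc h) (t : Tm2 Loc h),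
    plugR (compR C D) t = plugR C (plugR D t)
  | _, .hole, D, t => by simp [compR, dompW, plugR, plugW]
  | _, .whileE e C, D, t => by simp [compR, plugR, plug_compR C D t]
  | _, .assign e C, D, t => by simp [compR, plugR, plug_compR C D t]
  | _, .iteL e C q, D, t => by simp [compR, plugR, plug_compR C D t]
  | _, .iteR e p C, D, t => by simp [compR, plugR, plug_compR C D t]
  | _, .seqL C q, D, t => by simp [compR, plugR, plug_compR C D t]
  | _, .seqR p C, D, t => by simp [compR, plugR, plug_compR C D t]
  | _, .ref C, D, t => by simp [compR, plugR, plug_compR C D t]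
  | _, .proc C, D, t => by simp [compR, plugR, plug_compR C D t]

theorem plug_compW : ∀ {h : Sort2} (C : CtxW Loc .r) (D : CtxR Loc h) (t : Tm2 Loc h),
    plugW (compW C D) t = plugW C (plugR D t)
  | _, .assignW e C, D, t => by simp [compW, plugW, plug_compW C D t]
  | _, .seqWL C q, D, t => by simp [compW, plugW, plug_compW C D t]
  | _, .seqWR c C, D, t => by simp [compW, plugW, plug_compR C D t]
  | _, .refW C, D, t => by simp [compW, plugW, plug_compW C D t]
  | _, .outWC s C, D, t => by simp [compW, plugW, plug_compW C D t]
  | _, .outWS Cs c, D, t => by simp [compW, plugW, plug_compS Cs D t]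
  | _, .runWP C s, D, t => by simp [compW, plugW, plug_compR C D t]
  | _, .runWS p Cs, D, t => by simp [compW, plugW, plug_compS Cs D t]
  | _, .retVV C s, D, t => by simp [compW, plugW, plug_compR C D t]
  | _, .retVS v Cs, D, t => by simp [compW, plugW, plug_compS Cs D t]
  | _, .retSS Cs, D, t => by simp [compW, plugW, plug_compS Cs D t]

theorem plug_compS : ∀ {h : Sort2} (Cs : CtxS Loc .r) (D : CtxR Loc h) (t : Tm2 Loc h),
    plugS (compS Cs D) t = plugS Cs (plugR D t)
  | _, .mk s l C, D, t => by simp [compS, plugS, plug_compR C D t]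
end

mutual
theorem plug_dompR : ∀ {h : Sort2} (C : CtxR Loc .w) (D : CtxW Loc h) (t : Tm2 Loc h),
    plugR (dompR C D) t = plugR C (plugW D t)
  | _, .whileE e C, D, t => by simp [dompR, plugR, plug_dompR C D t]
  | _, .assign e C, D, t => by simp [dompR, plugR, plug_dompR C D t]
  | _, .iteL e C q, D, t => by simp [dompR, plugR, plug_dompR C D t]
  | _, .iteR e p C, D, t => by simp [dompR, plugR, plug_dompR C D t]
  | _, .seqL C q, D, t => by simp [dompR, plugR, plug_dompR C D t]
  | _, .seqR p C, D, t => by simp [dompR, plugR, plug_dompR C D t]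
  | _, .ref C, D, t => by simp [dompR, plugR, plug_dompR C D t]
  | _, .proc C, D, t => by simp [dompR, plugR, plug_dompR C D t]

theorem plug_dompW : ∀ {h : Sort2} (C : CtxW Loc .w) (D : CtxW Loc h) (t : Tm2 Loc h),
    plugW (dompW C D) t = plugW C (plugW D t)
  | _, .hole, D, t => by simp [compR, dompW, plugR, plugW]
  | _, .assignW e C, D, t => by simp [dompW, plugW, plug_dompW C D t]
  | _, .seqWL C q, D, t => by simp [dompW, plugW, plug_dompW C D t]
  | _, .seqWR c C, D, t => by simp [dompW, plugW, plug_dompR C D t]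
  | _, .refW C, D, t => by simp [dompW, plugW, plug_dompW C D t]
  | _, .outWC s C, D, t => by simp [dompW, plugW, plug_dompW C D t]
  | _, .outWS Cs c, D, t => by simp [dompW, plugW, plug_dompS Cs D t]
  | _, .runWP C s, D, t => by simp [dompW, plugW, plug_dompR C D t]
  | _, .runWS p Cs, D, t => by simp [dompW, plugW, plug_dompS Cs D t]
  | _, .retVV C s, D, t => by simp [dompW, plugW, plug_dompR C D t]
  | _, .retVS v Cs, D, t => by simp [dompW, plugW, plug_dompS Cs D t]
  | _, .retSS Cs, D, t => by simp [dompW, plugW, plug_dompS Cs D t]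

theorem plug_dompS : ∀ {h : Sort2} (Cs : CtxS Loc .w) (D : CtxW Loc h) (t : Tm2 Loc h),
    plugS (dompS Cs D) t = plugS Cs (plugW D t)
  | _, .mk s l C, D, t => by simp [dompS, plugS, plug_dompR C D t]
end

/-- Plugging into a reader context preserves `CtxEqR`. -/
lemma plug_eqR_R {p p' : Rd Loc} (h : CtxEqR p p') (D : CtxR Loc .r) :
    CtxEqR (plugR D p) (plugR D p') := by
  constructor
  · intro C s
    rw [← plug_compR C D p, ← plug_compR C D p']
    exact h.1 (compR C D) s
  · intro C
    rw [← plug_compW C D p, ← plug_compW C D p']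
    exact h.2 (compW C D)

/-- Plugging a reader into a writer context preserves equivalence. -/
lemma plug_eqR_W {p p' : Rd Loc} (h : CtxEqR p p') (E : CtxW Loc .r) :
    CtxEqW (plugW E p) (plugW E p') := by
  constructor
  · intro C s; exact (emptyCtxR C).elim
  · intro C
    rw [← plug_dompW C E p, ← plug_dompW C E p']
    exact h.2 (dompW C E)

/-- Plugging a writer into a writer context preserves `CtxEqW`. -/
lemma plug_eqW_W {c c' : Wr Loc} (h : CtxEqW c c') (E : CtxW Loc .w) :
    CtxEqW (plugW E c) (plugW E c') := by
  constructor
  · intro C s; exact (emptyCtxR C).elim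
  · intro C
    rw [← plug_dompW C E c, ← plug_dompW C E c']
    exact h.2 (dompW C E)

/-! ### Step-indexed convergence -/

/-- `c` is terminal: it has a `↓`-transition. -/
def TermW (c : Wr Loc) : Prop := (∃ s, WTr c (.dn s)) ∨ (∃ v s, WTr c (.dnV v s))

/-- Convergence within `n` steps. -/
def ConvN : ℕ → Wr Loc → Prop
  | 0, c => TermW c
  | n + 1, c => TermW c ∨ ∃ d, Step1 c d ∧ ConvN n d

lemma convN_cases {n : ℕ} {c : Wr Loc} (h : ConvN n c) :
    TermW c ∨ ∃ m, m < n ∧ ∃ d, Step1 c d ∧ ConvN m d := by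
  cases n with
  | zero => exact Or.inl h
  | succ n =>
    rcases h with h | ⟨d, hs, hd⟩
    · exact Or.inl h
    · exact Or.inr ⟨n, Nat.lt_succ_self n, d, hs, hd⟩

lemma convW_of_termW {c : Wr Loc} (h : TermW c) : ConvW c := by
  rcases h with ⟨s, h⟩ | ⟨v, s, h⟩
  · exact Or.inr ⟨s, c, Relation.ReflTransGen.refl, h⟩
  · exact Or.inl ⟨v, s, c, Relation.ReflTransGen.refl, h⟩

lemma convW_step {c d : Wr Loc} (hs : Step1 c d) (h : ConvW d) : ConvW c := by
  rcases h with ⟨v, s, c', hw, ht⟩ | ⟨s, c', hw, ht⟩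
  · exact Or.inl ⟨v, s, c', Relation.ReflTransGen.head hs hw, ht⟩
  · exact Or.inr ⟨s, c', Relation.ReflTransGen.head hs hw, ht⟩

lemma convW_iff_convN {c : Wr Loc} : ConvW c ↔ ∃ n, ConvN n c := by
  constructor
  · intro h
    have key : ∀ {c c' : Wr Loc}, Wk c c' → TermW c' → ∃ n, ConvN n c := by
      intro c c' hw
      induction hw using Relation.ReflTransGen.head_induction_on with
      | refl => exact fun ht => ⟨0, ht⟩
      | head hs _ ih =>
        intro ht
        obtain ⟨n, hn⟩ := ih ht
        exact ⟨n + 1, Or.inr ⟨_, hs, hn⟩⟩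
    rcases h with ⟨v, s, c', hw, ht⟩ | ⟨s, c', hw, ht⟩
    · exact key hw (Or.inr ⟨v, s, ht⟩)
    · exact key hw (Or.inl ⟨s, ht⟩)
  · rintro ⟨n, hn⟩
    induction n generalizing c with
    | zero => exact convW_of_termW hn
    | succ n ih =>
      rcases hn with h | ⟨d, hs, hd⟩
      · exact convW_of_termW h
      · exact convW_step hs (ih hd)

/-! ### Evaluation stacks -/

/-- Evaluation frames. -/
inductive Frame (Loc : Type) : Type
  | fSeq : Rd Loc → Frame Loc
  | fAsg : RExp Loc → Frame Loc
  | fRef : Frame Loc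

/-- Applying a frame to a writer. -/
def fapp : Frame Loc → Wr Loc → Wr Loc
  | .fSeq q, c => .seqW c q
  | .fAsg e, c => .assignW e c
  | .fRef, c => .refW c

/-- Filling an evaluation stack (innermost frame first). -/
def fill : List (Frame Loc) → Wr Loc → Wr Loc
  | [], c => c
  | F :: K, c => fill K (fapp F c)

/-- Relatedness of frames. -/
def FrameRel : Frame Loc → Frame Loc → Prop
  | .fSeq q, .fSeq q' => CtxEqR q q'
  | .fAsg e, .fAsg e' => e = e'
  | .fRef, .fRef => True
  | _, _ => False

def StackRel : List (Frame Loc) → List (Frame Loc) → Prop := List.Forall₂ FrameRel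

/-- Frames as writer contexts. -/
noncomputable def fctx : Frame Loc → CtxW Loc .r → CtxW Loc .r
  | .fSeq q, C => .seqWL C q
  | .fAsg e, C => .assignW e C
  | .fRef, C => .refW C

noncomputable def stackCtx : List (Frame Loc) → CtxW Loc .r → CtxW Loc .r
  | [], C => C
  | F :: K, C => stackCtx K (fctx F C)

lemma plug_fctx (F : Frame Loc) (C : CtxW Loc .r) (t : Rd Loc) :
    plugW (fctx F C) t = fapp F (plugW C t) := by
  cases F <;> simp [fctx, fapp, plugW]

lemma plug_stackCtx (K : List (Frame Loc)) (C : CtxW Loc .r) (t : Rd Loc) :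
    plugW (stackCtx K C) t = fill K (plugW C t) := by
  induction K generalizing C with
  | nil => rfl
  | cons F K ih => rw [stackCtx, fill, ih, plug_fctx]

lemma step_fapp {c d : Wr Loc} (F : Frame Loc) (h : Step1 c d) :
    Step1 (fapp F c) (fapp F d) := by
  rcases h with h | ⟨s, h⟩ <;> cases F
  · exact Or.inl (WTr.seqTau h)
  · exact Or.inl (WTr.asgTau h)
  · exact Or.inl (WTr.refTau h)
  · exact Or.inr ⟨s, WTr.seqOut h⟩
  · exact Or.inr ⟨s, WTr.asgOut h⟩
  · exact Or.inr ⟨s, WTr.refOut h⟩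

lemma step_fill {c d : Wr Loc} (K : List (Frame Loc)) (h : Step1 c d) :
    Step1 (fill K c) (fill K d) := by
  induction K generalizing c d with
  | nil => exact h
  | cons F K ih => exact ih (step_fapp F h)

/-! ### Transition-shape analysis -/

/-- All transitions of `c` are silent/output steps to a successor satisfying `P`. -/
def TO (c : Wr Loc) (P : Wr Loc → Prop) : Prop :=
  ∀ lab, WTr c lab → ∃ d, (lab = .tau d ∨ ∃ s, lab = .out s d) ∧ P d

lemma to_fapp {c : Wr Loc} {P : Wr Loc → Prop} (F : Frame Loc) (h : TO c P) :
    TO (fapp F c) (fun x => ∃ d, P d ∧ x = fapp F d) := by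
  cases F with
  | fSeq q =>
    intro lab hl
    cases hl with
    | seqTau h' =>
      obtain ⟨d, hd, hP⟩ := h _ h'
      rcases hd with hd | ⟨s, hd⟩
      · cases hd; exact ⟨_, Or.inl rfl, _, hP, rfl⟩
      · cases hd
    | seqOut h' =>
      obtain ⟨d, hd, hP⟩ := h _ h'
      rcases hd with hd | ⟨s', hd⟩
      · cases hd
      · cases hd; exact ⟨_, Or.inr ⟨_, rfl⟩, _, hP, rfl⟩
    | seqDnV h' =>
      obtain ⟨d, hd, _⟩ := h _ h'
      rcases hd with hd | ⟨s', hd⟩ <;> cases hd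
    | seqDn h' =>
      obtain ⟨d, hd, _⟩ := h _ h'
      rcases hd with hd | ⟨s', hd⟩ <;> cases hd
  | fAsg e =>
    intro lab hl
    cases hl with
    | asgTau h' =>
      obtain ⟨d, hd, hP⟩ := h _ h'
      rcases hd with hd | ⟨s, hd⟩
      · cases hd; exact ⟨_, Or.inl rfl, _, hP, rfl⟩
      · cases hd
    | asgOut h' =>
      obtain ⟨d, hd, hP⟩ := h _ h'
      rcases hd with hd | ⟨s', hd⟩
      · cases hd
      · cases hd; exact ⟨_, Or.inr ⟨_, rfl⟩, _, hP, rfl⟩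
    | asgDn he h' =>
      obtain ⟨d, hd, _⟩ := h _ h'
      rcases hd with hd | ⟨s', hd⟩ <;> cases hd
  | fRef =>
    intro lab hl
    cases hl with
    | refTau h' =>
      obtain ⟨d, hd, hP⟩ := h _ h'
      rcases hd with hd | ⟨s, hd⟩
      · cases hd; exact ⟨_, Or.inl rfl, _, hP, rfl⟩
      · cases hd
    | refOut h' =>
      obtain ⟨d, hd, hP⟩ := h _ h'
      rcases hd with hd | ⟨s', hd⟩
      · cases hd
      · cases hd; exact ⟨_, Or.inr ⟨_, rfl⟩, _, hP, rfl⟩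
    | refDn h' hl' =>
      obtain ⟨d, hd, _⟩ := h _ h'
      rcases hd with hd | ⟨s', hd⟩ <;> cases hd

/-- Key inversion: if all transitions of `c` are tau/out steps into `P`, then a
convergent `fill K c` must step (inside) to some `fill K d` with `P d`. -/
lemma to_fill {n : ℕ} {c : Wr Loc} {P : Wr Loc → Prop} (K : List (Frame Loc))
    (hTO : TO c P) (h : ConvN n (fill K c)) :
    ∃ m, m < n ∧ ∃ d, P d ∧ ConvN m (fill K d) := by
  induction K generalizing c P with
  | nil =>
    rcases convN_cases h with ht | ⟨m, hm, d, hs, hd⟩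
    · rcases ht with ⟨s, ht⟩ | ⟨v, s, ht⟩
      · obtain ⟨d, hd, _⟩ := hTO _ ht
        rcases hd with hd | ⟨s', hd⟩ <;> cases hd
      · obtain ⟨d, hd, _⟩ := hTO _ ht
        rcases hd with hd | ⟨s', hd⟩ <;> cases hd
    · rcases hs with hs | ⟨s, hs⟩
      · obtain ⟨d', hd', hP⟩ := hTO _ hs
        rcases hd' with hd' | ⟨s', hd'⟩
        · cases hd'; exact ⟨m, hm, d, hP, hd⟩
        · cases hd'
      · obtain ⟨d', hd', hP⟩ := hTO _ hs
        rcases hd' with hd' | ⟨s', hd'⟩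
        · cases hd'
        · cases hd'; exact ⟨m, hm, d, hP, hd⟩
  | cons F K ih =>
    obtain ⟨m, hm, x, ⟨d, hP, rfl⟩, hx⟩ := ih (to_fapp F hTO) h
    exact ⟨m, hm, d, hP, hx⟩

/-! ### Related stores evaluate expressions to related results -/

lemma eev_rel {Rr : Rd Loc → Rd Loc → Prop} {s s' : St Loc} (hs : SRel Rr s s') :
    ∀ e : RExp Loc, (eev s e = none ∧ eev s' e = none) ∨
      ∃ v v', eev s e = some v ∧ eev s' e = some v' ∧ VRel Rr v v' := by
  intro e
  induction e with
  | loc l => exact Or.inr ⟨.inl l, .inl l, rfl, rfl, rfl⟩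
  | int n => exact Or.inr ⟨.inr (.inl n), .inr (.inl n), rfl, rfl, rfl⟩
  | deref e ih =>
    rcases ih with ⟨h1, h2⟩ | ⟨v, v', h1, h2, hv⟩
    · exact Or.inl ⟨by simp [eev, h1], by simp [eev, h2]⟩
    · match v, v', hv with
      | .inl l, .inl l', hv =>
        cases hv
        rcases hs l with ⟨hl1, hl2⟩ | ⟨w, w', hl1, hl2, hw⟩
        · exact Or.inl ⟨by simp [eev, h1, hl1], by simp [eev, h2, hl2]⟩
        · exact Or.inr ⟨w, w', by simp [eev, h1, hl1], by simp [eev, h2, hl2], hw⟩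
      | .inr (.inl n), .inr (.inl n'), hv =>
        exact Or.inl ⟨by simp [eev, h1], by simp [eev, h2]⟩
      | .inr (.inr p), .inr (.inr p'), hv =>
        exact Or.inl ⟨by simp [eev, h1], by simp [eev, h2]⟩
  | add e1 e2 ih1 ih2 =>
    rcases ih1 with ⟨h1, h2⟩ | ⟨v, v', h1, h2, hv⟩
    · exact Or.inl ⟨by simp [eev, h1], by simp [eev, h2]⟩
    · match v, v', hv with
      | .inl l, .inl l', hv =>
        exact Or.inl ⟨by simp [eev, h1], by simp [eev, h2]⟩
      | .inr (.inr p), .inr (.inr p'), hv =>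
        exact Or.inl ⟨by simp [eev, h1], by simp [eev, h2]⟩
      | .inr (.inl n), .inr (.inl n'), hv =>
        cases hv
        rcases ih2 with ⟨g1, g2⟩ | ⟨w, w', g1, g2, hw⟩
        · exact Or.inl ⟨by simp [eev, h1, g1], by simp [eev, h2, g2]⟩
        · match w, w', hw with
          | .inl l, .inl l', hw =>
            exact Or.inl ⟨by simp [eev, h1, g1], by simp [eev, h2, g2]⟩
          | .inr (.inr p), .inr (.inr p'), hw =>
            exact Or.inl ⟨by simp [eev, h1, g1], by simp [eev, h2, g2]⟩
          | .inr (.inl m), .inr (.inl m'), hw =>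
            cases hw
            exact Or.inr ⟨.inr (.inl (n + m)), .inr (.inl (n + m)),
              by simp [eev, h1, g1], by simp [eev, h2, g2], rfl⟩
  | sub e1 e2 ih1 ih2 =>
    rcases ih1 with ⟨h1, h2⟩ | ⟨v, v', h1, h2, hv⟩
    · exact Or.inl ⟨by simp [eev, h1], by simp [eev, h2]⟩
    · match v, v', hv with
      | .inl l, .inl l', hv =>
        exact Or.inl ⟨by simp [eev, h1], by simp [eev, h2]⟩
      | .inr (.inr p), .inr (.inr p'), hv =>
        exact Or.inl ⟨by simp [eev, h1], by simp [eev, h2]⟩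
      | .inr (.inl n), .inr (.inl n'), hv =>
        cases hv
        rcases ih2 with ⟨g1, g2⟩ | ⟨w, w', g1, g2, hw⟩
        · exact Or.inl ⟨by simp [eev, h1, g1], by simp [eev, h2, g2]⟩
        · match w, w', hw with
          | .inl l, .inl l', hw =>
            exact Or.inl ⟨by simp [eev, h1, g1], by simp [eev, h2, g2]⟩
          | .inr (.inr p), .inr (.inr p'), hw =>
            exact Or.inl ⟨by simp [eev, h1, g1], by simp [eev, h2, g2]⟩
          | .inr (.inl m), .inr (.inl m'), hw =>
            cases hw
            exact Or.inr ⟨.inr (.inl (n - m)), .inr (.inl (n - m)),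
              by simp [eev, h1, g1], by simp [eev, h2, g2], rfl⟩

/-! ### The key simulation relation -/

/-- Writers of the same shape, with contextually-equivalent readers and
pointwise related stores. -/
inductive Ew : Wr Loc → Wr Loc → Prop
  | assignW {e c c'} : Ew c c' → Ew (.assignW e c) (.assignW e c')
  | seqW {c c' q q'} : Ew c c' → CtxEqR q q' → Ew (.seqW c q) (.seqW c' q')
  | refW {c c'} : Ew c c' → Ew (.refW c) (.refW c')
  | outW {s s' c c'} : SRel CtxEqR s s' → Ew c c' → Ew (.outW s c) (.outW s' c')
  | runW {p q s s'} : CtxEqR p q → SRel CtxEqR s s' → Ew (.runW p s) (.runW q s')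
  | retV {v v' s s'} : VRel CtxEqR v v' → SRel CtxEqR s s' → Ew (.retV v s) (.retV v' s')
  | retS {s s'} : SRel CtxEqR s s' → Ew (.retS s) (.retS s')

lemma ew_refl : ∀ c : Wr Loc, Ew c c
  | .assignW e c => .assignW (ew_refl c)
  | .seqW c q => .seqW (ew_refl c) (ctxEqR_refl q)
  | .refW c => .refW (ew_refl c)
  | .outW s c => .outW (srel_refl ctxEqR_refl s) (ew_refl c)
  | .runW p s => .runW (ctxEqR_refl p) (srel_refl ctxEqR_refl s)
  | .retV v s => .retV (vrel_refl ctxEqR_refl v) (srel_refl ctxEqR_refl s)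
  | .retS s => .retS (srel_refl ctxEqR_refl s)

lemma ew_symm {c d : Wr Loc} (h : Ew c d) : Ew d c := by
  induction h with
  | assignW _ ih => exact .assignW ih
  | seqW _ hq ih => exact .seqW ih (ctxEqR_symm hq)
  | refW _ ih => exact .refW ih
  | outW hs _ ih => exact .outW (srel_symm (fun _ _ => ctxEqR_symm) hs) ih
  | runW hp hs => exact .runW (ctxEqR_symm hp) (srel_symm (fun _ _ => ctxEqR_symm) hs)
  | retV hv hs =>
    exact .retV (vrel_symm (fun _ _ => ctxEqR_symm) _ _ hv)
      (srel_symm (fun _ _ => ctxEqR_symm) hs)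
  | retS hs => exact .retS (srel_symm (fun _ _ => ctxEqR_symm) hs)

/-- Related stores yield `Ew`-related results of single reader steps. -/
lemma rstep_rel {p : Rd Loc} {s s' : St Loc} (hs : SRel CtxEqR s s') {c₀ : Wr Loc}
    (h : rstep p s = some c₀) : ∃ d₀, rstep p s' = some d₀ ∧ Ew c₀ d₀ := by
  cases p with
  | skip =>
    refine ⟨.retS s', rfl, ?_⟩
    cases h; exact .retS hs
  | whileE e p =>
    rcases eev_rel hs e with ⟨h1, h2⟩ | ⟨v, v', h1, h2, hv⟩
    · rw [rstep, h1] at h; cases h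
    · match v, v', hv with
      | .inl l, .inl l', hv => rw [rstep, h1] at h; cases h
      | .inr (.inr r), .inr (.inr r'), hv => rw [rstep, h1] at h; cases h
      | .inr (.inl n), .inr (.inl n'), hv =>
        cases hv
        rw [rstep, h1] at h
        by_cases hn : n = 0
        · simp only [hn, if_pos rfl] at h
          cases h
          exact ⟨.retS s', by rw [rstep, h2]; simp [hn], .retS hs⟩
        · simp only [if_neg hn] at h
          cases h
          exact ⟨.outW s' (.runW (p.seq (.whileE e p)) s'),
            by rw [rstep, h2]; simp [if_neg hn], .outW hs (.runW (ctxEqR_refl _) hs)⟩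
  | assign e p =>
    cases h
    exact ⟨_, rfl, .assignW (.runW (ctxEqR_refl p) hs)⟩
  | ite e p q =>
    rcases eev_rel hs e with ⟨h1, h2⟩ | ⟨v, v', h1, h2, hv⟩
    · rw [rstep, h1] at h; cases h
    · match v, v', hv with
      | .inl l, .inl l', hv => rw [rstep, h1] at h; cases h
      | .inr (.inr r), .inr (.inr r'), hv => rw [rstep, h1] at h; cases h
      | .inr (.inl n), .inr (.inl n'), hv =>
        cases hv
        rw [rstep, h1] at h
        by_cases hn : n = 0
        · simp only [hn, if_pos rfl] at h
          cases h
          exact ⟨.outW s' (.runW q s'), by rw [rstep, h2]; simp [hn],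
            .outW hs (.runW (ctxEqR_refl _) hs)⟩
        · simp only [if_neg hn] at h
          cases h
          exact ⟨.outW s' (.runW p s'), by rw [rstep, h2]; simp [if_neg hn],
            .outW hs (.runW (ctxEqR_refl _) hs)⟩
  | seq p q =>
    cases h
    exact ⟨_, rfl, .seqW (.runW (ctxEqR_refl p) hs) (ctxEqR_refl q)⟩
  | ref p =>
    cases h
    exact ⟨_, rfl, .refW (.runW (ctxEqR_refl p) hs)⟩
  | expr e =>
    rcases eev_rel hs e with ⟨h1, h2⟩ | ⟨v, v', h1, h2, hv⟩
    · rw [rstep, h1] at h; cases h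
    · match v, v', hv with
      | .inl l, .inl l', hv =>
        cases hv
        rw [rstep, h1] at h; cases h
        exact ⟨.retV (.inl l) s', by rw [rstep, h2],
          .retV (show VRel CtxEqR (.inl l) (.inl l) from rfl) hs⟩
      | .inr (.inl n), .inr (.inl n'), hv =>
        cases hv
        rw [rstep, h1] at h; cases h
        exact ⟨.retV (.inr (.inl n)) s', by rw [rstep, h2],
          .retV (show VRel CtxEqR (.inr (.inl n)) (.inr (.inl n)) from rfl) hs⟩
      | .inr (.inr r), .inr (.inr r'), hv =>
        rw [rstep, h1] at h; cases h
        exact ⟨_, by rw [rstep, h2], .outW hs (.runW hv hs)⟩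
  | proc p =>
    cases h
    exact ⟨_, rfl, .retV (show VRel CtxEqR (.inr (.inr p)) (.inr (.inr p)) from
      ctxEqR_refl p) hs⟩

/-! ### The main simulation lemma -/

theorem main_sim : ∀ n : ℕ, ∀ c d : Wr Loc, Ew c d → ∀ K K' : List (Frame Loc),
    StackRel K K' → ConvN n (fill K c) → ConvW (fill K' d) := by
  intro n
  induction n using Nat.strong_induction_on with
  | _ n SIH =>
  -- Transfer for heads whose only transitions are `↓ s`.
  have lemD : ∀ K : List (Frame Loc), ∀ {K' : List (Frame Loc)} {c c' : Wr Loc},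
      StackRel K K' →
      (∀ lab, WTr c lab → ∃ s₀, lab = .dn s₀) →
      (∀ s₀, WTr c (.dn s₀) → ∃ s₀', WTr c' (.dn s₀') ∧ SRel CtxEqR s₀ s₀') →
      ConvN n (fill K c) → ConvW (fill K' c') := by
    intro K
    induction K with
    | nil =>
      intro K' c c' hK hlab hmatch h
      cases hK
      rcases convN_cases h with ht | ⟨m, hm, d, hsd, hd⟩
      · rcases ht with ⟨s₀, ht⟩ | ⟨v, s₀, ht⟩
        · obtain ⟨s₀', ht', _⟩ := hmatch _ ht
          exact convW_of_termW (Or.inl ⟨s₀', ht'⟩)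
        · obtain ⟨s₁, hs₁⟩ := hlab _ ht; cases hs₁
      · rcases hsd with hsd | ⟨s, hsd⟩ <;>
          · obtain ⟨s₁, hs₁⟩ := hlab _ hsd; cases hs₁
    | cons F K ih =>
      intro K' c c' hK hlab hmatch h
      cases hK with
      | cons hF hK₀ =>
        rename_i F' K₀'
        cases F with
        | fSeq q =>
          cases F' with
          | fSeq q' =>
            have hTO : TO (Wr.seqW c q)
                (fun x => ∃ s₀, WTr c (.dn s₀) ∧ x = .runW q s₀) := by
              intro lab hl
              cases hl with
              | seqTau h' => obtain ⟨s₁, hs₁⟩ := hlab _ h'; cases hs₁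
              | seqOut h' => obtain ⟨s₁, hs₁⟩ := hlab _ h'; cases hs₁
              | seqDnV h' => obtain ⟨s₁, hs₁⟩ := hlab _ h'; cases hs₁
              | seqDn h' => exact ⟨_, Or.inl rfl, _, h', rfl⟩
            obtain ⟨m, hm, x, ⟨s₀, hdn, rfl⟩, hx⟩ := to_fill K hTO h
            obtain ⟨s₀', ht', hsrel⟩ := hmatch _ hdn
            have := SIH m hm _ _ (Ew.runW hF hsrel) K K₀' hK₀ hx
            exact convW_step (step_fill K₀' (Or.inl (WTr.seqDn ht'))) this
          | fAsg e' => exact hF.elim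
          | fRef => exact hF.elim
        | fAsg e =>
          cases F' with
          | fSeq q' => exact hF.elim
          | fRef => exact hF.elim
          | fAsg e' =>
            cases hF
            have hTO : TO (Wr.assignW e c) (fun _ => False) := by
              intro lab hl
              cases hl with
              | asgTau h' => obtain ⟨s₁, hs₁⟩ := hlab _ h'; cases hs₁
              | asgOut h' => obtain ⟨s₁, hs₁⟩ := hlab _ h'; cases hs₁
              | asgDn he h' => obtain ⟨s₁, hs₁⟩ := hlab _ h'; cases hs₁
            obtain ⟨m, hm, x, hFalse, _⟩ := to_fill K hTO h
            exact hFalse.elim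
        | fRef =>
          cases F' with
          | fSeq q' => exact hF.elim
          | fAsg e' => exact hF.elim
          | fRef =>
            have hTO : TO (Wr.refW c) (fun _ => False) := by
              intro lab hl
              cases hl with
              | refTau h' => obtain ⟨s₁, hs₁⟩ := hlab _ h'; cases hs₁
              | refOut h' => obtain ⟨s₁, hs₁⟩ := hlab _ h'; cases hs₁
              | refDn h' hl' => obtain ⟨s₁, hs₁⟩ := hlab _ h'; cases hs₁
            obtain ⟨m, hm, x, hFalse, _⟩ := to_fill K hTO h
            exact hFalse.elim
  -- Transfer for heads whose only transitions are `↓ v, s`.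
  have lemV : ∀ K : List (Frame Loc), ∀ {K' : List (Frame Loc)} {c c' : Wr Loc},
      StackRel K K' →
      (∀ lab, WTr c lab → ∃ v₀ s₀, lab = .dnV v₀ s₀) →
      (∀ v₀ s₀, WTr c (.dnV v₀ s₀) → ∃ v₀' s₀', WTr c' (.dnV v₀' s₀') ∧
        VRel CtxEqR v₀ v₀' ∧ SRel CtxEqR s₀ s₀') →
      ConvN n (fill K c) → ConvW (fill K' c') := by
    intro K
    induction K with
    | nil =>
      intro K' c c' hK hlab hmatch h
      cases hK
      rcases convN_cases h with ht | ⟨m, hm, d, hsd, hd⟩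
      · rcases ht with ⟨s₀, ht⟩ | ⟨v, s₀, ht⟩
        · obtain ⟨v₁, s₁, hs₁⟩ := hlab _ ht; cases hs₁
        · obtain ⟨v₀', s₀', ht', _, _⟩ := hmatch _ _ ht
          exact convW_of_termW (Or.inr ⟨v₀', s₀', ht'⟩)
      · rcases hsd with hsd | ⟨s, hsd⟩ <;>
          · obtain ⟨v₁, s₁, hs₁⟩ := hlab _ hsd; cases hs₁
    | cons F K ih =>
      intro K' c c' hK hlab hmatch h
      cases hK with
      | cons hF hK₀ =>
        rename_i F' K₀'
        cases F with
        | fSeq q =>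
          cases F' with
          | fSeq q' =>
            have hTO : TO (Wr.seqW c q)
                (fun x => ∃ v₀ s₀, WTr c (.dnV v₀ s₀) ∧ x = .runW q s₀) := by
              intro lab hl
              cases hl with
              | seqTau h' => obtain ⟨v₁, s₁, hs₁⟩ := hlab _ h'; cases hs₁
              | seqOut h' => obtain ⟨v₁, s₁, hs₁⟩ := hlab _ h'; cases hs₁
              | seqDn h' => obtain ⟨v₁, s₁, hs₁⟩ := hlab _ h'; cases hs₁
              | seqDnV h' => exact ⟨_, Or.inr ⟨_, rfl⟩, _, _, h', rfl⟩
            obtain ⟨m, hm, x, ⟨v₀, s₀, hdnv, rfl⟩, hx⟩ := to_fill K hTO h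
            obtain ⟨v₀', s₀', ht', hv, hsrel⟩ := hmatch _ _ hdnv
            have := SIH m hm _ _ (Ew.runW hF hsrel) K K₀' hK₀ hx
            exact convW_step (step_fill K₀' (Or.inr ⟨s₀', WTr.seqDnV ht'⟩)) this
          | fAsg e' => exact hF.elim
          | fRef => exact hF.elim
        | fAsg e =>
          cases F' with
          | fSeq q' => exact hF.elim
          | fRef => exact hF.elim
          | fAsg e' =>
            cases hF
            show ConvW (fill K₀' (Wr.assignW e c'))
            have h' : ConvN n (fill K (Wr.assignW e c)) := h
            refine lemD K (c := Wr.assignW e c) (c' := Wr.assignW e c') hK₀ ?_ ?_ h'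
            · intro lab hl
              cases hl with
              | asgTau h' => obtain ⟨v₁, s₁, hs₁⟩ := hlab _ h'; cases hs₁
              | asgOut h' => obtain ⟨v₁, s₁, hs₁⟩ := hlab _ h'; cases hs₁
              | asgDn he h' => exact ⟨_, rfl⟩
            · intro s₂ hl
              cases hl with
              | asgDn he h' =>
                rename_i v₀ s₀ l
                obtain ⟨v₀', s₀', ht', hv, hsrel⟩ := hmatch _ _ h'
                rcases eev_rel hsrel e with ⟨g1, g2⟩ | ⟨w, w', g1, g2, hw⟩
                · rw [he] at g1; cases g1
                · rw [he] at g1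
                  injection g1 with g1
                  subst g1
                  match w', hw with
                  | .inl l2, hw =>
                    cases hw
                    exact ⟨updS s₀' l v₀', WTr.asgDn g2 ht', srel_updS hsrel hv l⟩
        | fRef =>
          cases F' with
          | fSeq q' => exact hF.elim
          | fAsg e' => exact hF.elim
          | fRef =>
            show ConvW (fill K₀' (Wr.refW c'))
            have h' : ConvN n (fill K (Wr.refW c)) := h
            refine ih (c := Wr.refW c) (c' := Wr.refW c') hK₀ ?_ ?_ h'
            · intro lab hl
              cases hl with
              | refTau h' => obtain ⟨v₁, s₁, hs₁⟩ := hlab _ h'; cases hs₁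
              | refOut h' => obtain ⟨v₁, s₁, hs₁⟩ := hlab _ h'; cases hs₁
              | refDn h' hfresh => exact ⟨_, _, rfl⟩
            · intro w s₂ hl
              cases hl with
              | refDn h' hfresh =>
                rename_i v₀ s₀ l
                obtain ⟨v₀', s₀', ht', hv, hsrel⟩ := hmatch _ _ h'
                have hfresh' : s₀' l = none := by
                  rcases hsrel l with ⟨h1, h2⟩ | ⟨v1, v2, h1, h2, _⟩
                  · exact h2
                  · rw [hfresh] at h1; cases h1
                exact ⟨_, _, WTr.refDn ht' hfresh',
                  show VRel CtxEqR (.inl l) (.inl l) from rfl, srel_updS hsrel hv l⟩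
  -- Main induction on the `Ew` derivation.
  intro c d hE
  induction hE with
  | assignW hcc ihE =>
    rename_i e c c'
    intro K K' hK h
    exact ihE (.fAsg e :: K) (.fAsg e :: K')
      (List.Forall₂.cons (show FrameRel (.fAsg e) (.fAsg e) from rfl) hK) h
  | seqW hcc hq ihE =>
    rename_i c c' q q'
    intro K K' hK h
    exact ihE (.fSeq q :: K) (.fSeq q' :: K') (List.Forall₂.cons hq hK) h
  | refW hcc ihE =>
    intro K K' hK h
    exact ihE (.fRef :: K) (.fRef :: K')
      (List.Forall₂.cons (show FrameRel .fRef .fRef from trivial) hK) h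
  | outW hs hcc ihE =>
    rename_i s s' c c'
    intro K K' hK h
    have hTO : TO (Wr.outW s c) (fun x => x = c) := by
      intro lab hl
      cases hl with
      | outW => exact ⟨c, Or.inr ⟨s, rfl⟩, rfl⟩
    obtain ⟨m, hm, x, rfl, hx⟩ := to_fill K hTO h
    have := SIH m hm _ _ hcc K K' hK hx
    exact convW_step (step_fill K' (Or.inr ⟨s', WTr.outW⟩)) this
  | runW hpq hs =>
    rename_i p q s s'
    intro K K' hK h
    cases hrp : rstep p s with
    | none =>
      have hTO : TO (Wr.runW p s) (fun _ => False) := by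
        intro lab hl
        cases hl with
        | runW h' => rw [hrp] at h'; cases h'
      obtain ⟨m, hm, x, hFalse, _⟩ := to_fill K hTO h
      exact hFalse.elim
    | some c₀ =>
      have hTO : TO (Wr.runW p s) (fun x => x = c₀) := by
        intro lab hl
        cases hl with
        | runW h' =>
          rw [hrp] at h'
          injection h' with h'
          subst h'
          exact ⟨c₀, Or.inl rfl, rfl⟩
      obtain ⟨m, hm, x, rfl, hx⟩ := to_fill K hTO h
      obtain ⟨d₀, hrd₀, hEw₀⟩ := rstep_rel hs hrp
      have h1 := SIH m hm _ _ hEw₀ K K' hK hx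
      have h2 : ConvW (fill K' (Wr.runW p s')) :=
        convW_step (step_fill K' (Or.inl (WTr.runW hrd₀))) h1
      have hiff := hpq.2 (stackCtx K' (.runWP .hole s'))
      rw [plug_stackCtx, plug_stackCtx] at hiff
      simp only [plugW, plugR] at hiff
      exact hiff.mp h2
  | retV hv hs =>
    rename_i v v' s s'
    intro K K' hK h
    refine lemV K hK ?_ ?_ h
    · intro lab hl
      cases hl with
      | retV => exact ⟨_, _, rfl⟩
    · intro v₀ s₀ hl
      cases hl with
      | retV => exact ⟨v', s', WTr.retV, hv, hs⟩
  | retS hs =>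
    rename_i s s'
    intro K K' hK h
    refine lemD K hK ?_ ?_ h
    · intro lab hl
      cases hl with
      | retS => exact ⟨_, rfl⟩
    · intro s₀ hl
      cases hl with
      | retS => exact ⟨s', WTr.retS, hs⟩

/-! ### Adequacy of `Ew` and consequences -/

lemma ew_conv {c d : Wr Loc} (hE : Ew c d) (h : ConvW c) : ConvW d := by
  obtain ⟨n, hn⟩ := convW_iff_convN.mp h
  have := main_sim n c d hE [] [] List.Forall₂.nil hn
  exact this

lemma ew_iff {c d : Wr Loc} (hE : Ew c d) : ConvW c ↔ ConvW d :=
  ⟨ew_conv hE, ew_conv (ew_symm hE)⟩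

lemma plug_ew : ∀ (C : CtxW Loc .w) {c c' : Wr Loc}, Ew c c' →
    Ew (plugW C c) (plugW C c')
  | .hole, _, _, h => h
  | .assignW e C, _, _, h => by
      simpa only [plugW] using Ew.assignW (plug_ew C h)
  | .seqWL C q, _, _, h => by
      simpa only [plugW] using Ew.seqW (plug_ew C h) (ctxEqR_refl q)
  | .seqWR _ C, _, _, _ => (emptyCtxR C).elim
  | .refW C, _, _, h => by
      simpa only [plugW] using Ew.refW (plug_ew C h)
  | .outWC s C, _, _, h => by
      simpa only [plugW] using Ew.outW (srel_refl ctxEqR_refl s) (plug_ew C h)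
  | .outWS Cs _, _, _, _ => (emptyCtxS Cs).elim
  | .runWP C _, _, _, _ => (emptyCtxR C).elim
  | .runWS _ Cs, _, _, _ => (emptyCtxS Cs).elim
  | .retVV C _, _, _, _ => (emptyCtxR C).elim
  | .retVS _ Cs, _, _, _ => (emptyCtxS Cs).elim
  | .retSS Cs, _, _, _ => (emptyCtxS Cs).elim

lemma ew_ctxEqW {c d : Wr Loc} (h : Ew c d) : CtxEqW c d :=
  ⟨fun C _ => (emptyCtxR C).elim, fun C => ew_iff (plug_ew C h)⟩

/-! ### Contextual equivalence is an adequate congruence -/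

lemma ctxEq_adequate : IsAdequate (CtxEqR (Loc := Loc)) CtxEqW := by
  constructor
  · intro p q h s
    have := h.1 .hole s
    simpa only [plugR] using this
  · intro c d h
    have := h.2 .hole
    simpa only [plugW] using this

lemma ctxEq_congr : IsCongrRef (CtxEqR (Loc := Loc)) CtxEqW := by
  refine ⟨?_, ?_, ?_, ?_, ?_, ?_, ?_, ?_, ?_, ?_, ?_, ?_, ?_, ?_, ?_⟩
  · intro p p' q q' h1 h2
    have t1 := plug_eqR_R h1 (.seqL .hole q)
    have t2 := plug_eqR_R h2 (.seqR p' .hole)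
    simp only [plugR] at t1 t2
    exact ctxEqR_trans t1 t2
  · intro e p p' h
    have t := plug_eqR_R h (.whileE e .hole)
    simpa only [plugR] using t
  · intro e p p' q q' h1 h2
    have t1 := plug_eqR_R h1 (.iteL e .hole q)
    have t2 := plug_eqR_R h2 (.iteR e p' .hole)
    simp only [plugR] at t1 t2
    exact ctxEqR_trans t1 t2
  · intro e p p' h
    have t := plug_eqR_R h (.assign e .hole)
    simpa only [plugR] using t
  · intro p p' h
    have t := plug_eqR_R h (.ref .hole)
    simpa only [plugR] using t
  · intro p p' h
    have t := plug_eqR_R h (.proc .hole)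
    simpa only [plugR] using t
  · exact ctxEqR_refl _
  · intro e
    exact ctxEqR_refl _
  · intro c c' q q' h1 h2
    have t1 := plug_eqW_W h1 (.seqWL .hole q)
    have t2 := plug_eqR_W h2 (.seqWR c' .hole)
    simp only [plugW, plugR] at t1 t2
    exact ctxEqW_trans t1 t2
  · intro e c c' h
    have t := plug_eqW_W h (.assignW e .hole)
    simpa only [plugW] using t
  · intro c c' h
    have t := plug_eqW_W h (.refW .hole)
    simpa only [plugW] using t
  · intro s s' c c' hs hcc
    have t1 := plug_eqW_W hcc (.outWC s .hole)
    simp only [plugW] at t1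
    exact ctxEqW_trans t1 (ew_ctxEqW (Ew.outW hs (ew_refl c')))
  · intro p p' s s' h1 h2
    exact ew_ctxEqW (Ew.runW h1 h2)
  · intro v v' s s' h1 h2
    exact ew_ctxEqW (Ew.retV h1 h2)
  · intro s s' h
    exact ew_ctxEqW (Ew.retS h)

/-! ### Every adequate congruence is contained in contextual equivalence -/

section Greatest

variable {Rr : Rd Loc → Rd Loc → Prop} {Rw : Wr Loc → Wr Loc → Prop}

/-- The two-sorted relation packaging `Rr` and `Rw`. -/
def Rel2 (Rr : Rd Loc → Rd Loc → Prop) (Rw : Wr Loc → Wr Loc → Prop) :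
    (h : Sort2) → Tm2 Loc h → Tm2 Loc h → Prop
  | .r => Rr
  | .w => Rw

def rrRefl (hC : IsCongrRef Rr Rw) : ∀ p : Rd Loc, Rr p p
  | .skip => hC.2.2.2.2.2.2.1
  | .whileE e p => hC.2.1 e _ _ (rrRefl hC p)
  | .assign e p => hC.2.2.2.1 e _ _ (rrRefl hC p)
  | .ite e p q => hC.2.2.1 e _ _ _ _ (rrRefl hC p) (rrRefl hC q)
  | .seq p q => hC.1 _ _ _ _ (rrRefl hC p) (rrRefl hC q)
  | .ref p => hC.2.2.2.2.1 _ _ (rrRefl hC p)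
  | .expr e => hC.2.2.2.2.2.2.2.1 e
  | .proc p => hC.2.2.2.2.2.1 _ _ (rrRefl hC p)

def rwRefl (hC : IsCongrRef Rr Rw) : ∀ c : Wr Loc, Rw c c
  | .assignW e c => hC.2.2.2.2.2.2.2.2.2.1 e _ _ (rwRefl hC c)
  | .seqW c q => hC.2.2.2.2.2.2.2.2.1 _ _ _ _ (rwRefl hC c) (rrRefl hC q)
  | .refW c => hC.2.2.2.2.2.2.2.2.2.2.1 _ _ (rwRefl hC c)
  | .outW s c => hC.2.2.2.2.2.2.2.2.2.2.2.1 s s _ _ (srel_refl (rrRefl hC) s)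
      (rwRefl hC c)
  | .runW p s => hC.2.2.2.2.2.2.2.2.2.2.2.2.1 _ _ s s (rrRefl hC p)
      (srel_refl (rrRefl hC) s)
  | .retV v s => hC.2.2.2.2.2.2.2.2.2.2.2.2.2.1 v v s s (vrel_refl (rrRefl hC) v)
      (srel_refl (rrRefl hC) s)
  | .retS s => hC.2.2.2.2.2.2.2.2.2.2.2.2.2.2 s s (srel_refl (rrRefl hC) s)

mutual

def plugPresR (hC : IsCongrRef Rr Rw) :
    ∀ {h : Sort2} (C : CtxR Loc h) (t t' : Tm2 Loc h),
      Rel2 Rr Rw h t t' → Rr (plugR C t) (plugR C t')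
  | _, .hole, _, _, ht => ht
  | _, .whileE e C, t, t', ht => by
      simpa only [plugR] using hC.2.1 e _ _ (plugPresR hC C t t' ht)
  | _, .assign e C, t, t', ht => by
      simpa only [plugR] using hC.2.2.2.1 e _ _ (plugPresR hC C t t' ht)
  | _, .iteL e C q, t, t', ht => by
      simpa only [plugR] using
        hC.2.2.1 e _ _ _ _ (plugPresR hC C t t' ht) (rrRefl hC q)
  | _, .iteR e p C, t, t', ht => by
      simpa only [plugR] using
        hC.2.2.1 e _ _ _ _ (rrRefl hC p) (plugPresR hC C t t' ht)
  | _, .seqL C q, t, t', ht => by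
      simpa only [plugR] using hC.1 _ _ _ _ (plugPresR hC C t t' ht) (rrRefl hC q)
  | _, .seqR p C, t, t', ht => by
      simpa only [plugR] using hC.1 _ _ _ _ (rrRefl hC p) (plugPresR hC C t t' ht)
  | _, .ref C, t, t', ht => by
      simpa only [plugR] using hC.2.2.2.2.1 _ _ (plugPresR hC C t t' ht)
  | _, .proc C, t, t', ht => by
      simpa only [plugR] using hC.2.2.2.2.2.1 _ _ (plugPresR hC C t t' ht)

def plugPresW (hC : IsCongrRef Rr Rw) :
    ∀ {h : Sort2} (C : CtxW Loc h) (t t' : Tm2 Loc h),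
      Rel2 Rr Rw h t t' → Rw (plugW C t) (plugW C t')
  | _, .hole, _, _, ht => ht
  | _, .assignW e C, t, t', ht => by
      simpa only [plugW] using
        hC.2.2.2.2.2.2.2.2.2.1 e _ _ (plugPresW hC C t t' ht)
  | _, .seqWL C q, t, t', ht => by
      simpa only [plugW] using
        hC.2.2.2.2.2.2.2.2.1 _ _ _ _ (plugPresW hC C t t' ht) (rrRefl hC q)
  | _, .seqWR c C, t, t', ht => by
      simpa only [plugW] using
        hC.2.2.2.2.2.2.2.2.1 _ _ _ _ (rwRefl hC c) (plugPresR hC C t t' ht)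
  | _, .refW C, t, t', ht => by
      simpa only [plugW] using
        hC.2.2.2.2.2.2.2.2.2.2.1 _ _ (plugPresW hC C t t' ht)
  | _, .outWC s C, t, t', ht => by
      simpa only [plugW] using
        hC.2.2.2.2.2.2.2.2.2.2.2.1 s s _ _ (srel_refl (rrRefl hC) s)
          (plugPresW hC C t t' ht)
  | _, .outWS Cs c, t, t', ht => by
      simpa only [plugW] using
        hC.2.2.2.2.2.2.2.2.2.2.2.1 _ _ _ _ (plugPresS hC Cs t t' ht) (rwRefl hC c)
  | _, .runWP C s, t, t', ht => by
      simpa only [plugW] using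
        hC.2.2.2.2.2.2.2.2.2.2.2.2.1 _ _ s s (plugPresR hC C t t' ht)
          (srel_refl (rrRefl hC) s)
  | _, .runWS p Cs, t, t', ht => by
      simpa only [plugW] using
        hC.2.2.2.2.2.2.2.2.2.2.2.2.1 _ _ _ _ (rrRefl hC p) (plugPresS hC Cs t t' ht)
  | _, .retVV C s, t, t', ht => by
      simpa only [plugW] using
        hC.2.2.2.2.2.2.2.2.2.2.2.2.2.1 _ _ s s
          (show VRel Rr (.inr (.inr (plugR C t))) (.inr (.inr (plugR C t'))) from
            plugPresR hC C t t' ht)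
          (srel_refl (rrRefl hC) s)
  | _, .retVS v Cs, t, t', ht => by
      simpa only [plugW] using
        hC.2.2.2.2.2.2.2.2.2.2.2.2.2.1 v v _ _ (vrel_refl (rrRefl hC) v)
          (plugPresS hC Cs t t' ht)
  | _, .retSS Cs, t, t', ht => by
      simpa only [plugW] using
        hC.2.2.2.2.2.2.2.2.2.2.2.2.2.2 _ _ (plugPresS hC Cs t t' ht)

def plugPresS (hC : IsCongrRef Rr Rw) :
    ∀ {h : Sort2} (Cs : CtxS Loc h) (t t' : Tm2 Loc h),
      Rel2 Rr Rw h t t' → SRel Rr (plugS Cs t) (plugS Cs t')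
  | _, .mk s l C, t, t', ht => by
      simp only [plugS]
      exact srel_updS (srel_refl (rrRefl hC) s)
        (show VRel Rr (.inr (.inr (plugR C t))) (.inr (.inr (plugR C t'))) from
          plugPresR hC C t t' ht) l

end

end Greatest

/-- contextual equivalence `≡ctx` of Ref² is the greatest
adequate congruence: `≡ctx` is an adequate congruence on `(Rd, Wr)`, and every
adequate congruence `R` is contained in `≡ctx` in both sorts. -/
theorem contextual_equivalence_greatest_adequate_congruence :
    (IsAdequate (CtxEqR (Loc := Loc)) CtxEqW ∧
      IsCongrRef (CtxEqR (Loc := Loc)) CtxEqW) ∧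
    (∀ (Rr : Rd Loc → Rd Loc → Prop) (Rw : Wr Loc → Wr Loc → Prop),
      IsAdequate Rr Rw → IsCongrRef Rr Rw →
        (∀ p q, Rr p q → CtxEqR p q) ∧ (∀ c d, Rw c d → CtxEqW c d)) := by
  refine ⟨⟨ctxEq_adequate, ctxEq_congr⟩, ?_⟩
  intro Rr Rw hA hC
  constructor
  · intro p q h
    exact ⟨fun C s => hA.1 _ _ (plugPresR hC C p q h) s,
           fun C => hA.2 _ _ (plugPresW hC C p q h)⟩
  · intro c d h
    exact ⟨fun C _ => (emptyCtxR C).elim,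
           fun C => hA.2 _ _ (plugPresW hC C c d h)⟩

end RefLang
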